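/- Let n ≥ 1 and suppose w₀, …, w_n are points of the unit sphere S^{n−1} ⊆ ℝⁿ such that Σ_{i=0}^{n} λᵢ wᵢ = 0 for some real numbers λᵢ ≥ 0 with Σ λᵢ = 1. Then d(wᵢ, wⱼ) ≥ π − arccos(1/n) for some indices i, j, equivalently ⟨wᵢ, wⱼ⟩ ≤ −1/n for some i, j. -/
import Mathlib

open RealInnerProductSpace

lemma arccos_part (n : ℕ) (x : ℝ) (hx : x ≤ -(1/n)) :
    Real.pi - Real.arccos (1 / n) ≤ Real.arccos x := by
  have h := Real.monotone_arcsin hx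
  rw [Real.arcsin_neg] at h
  rw [Real.arccos, Real.arccos]
  linarith

theorem stmt10 (n : ℕ) (hn : 1 ≤ n)
    (w : Fin (n + 1) → EuclideanSpace ℝ (Fin n)) (hw : ∀ i, ‖w i‖ = 1)
    (lam : Fin (n + 1) → ℝ) (hlam : ∀ i, 0 ≤ lam i) (hsum : ∑ i, lam i = 1)
    (hzero : ∑ i, lam i • w i = 0) :
    ∃ i j, ⟪w i, w j⟫ ≤ -(1 / n) ∧
      Real.pi - Real.arccos (1 / n) ≤ Real.arccos ⟪w i, w j⟫ := by
  have hN : (1:ℝ) ≤ (n:ℝ) := by exact_mod_cast hn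
  have hn0 : (0:ℝ) < n := by linarith
  have hinv : (n:ℝ) * (1/n) = 1 := by field_simp
  have hinv1 : ((n:ℝ)+1) * (1/((n:ℝ)+1)) = 1 := by field_simp
  obtain ⟨i, -, hmax⟩ := Finset.exists_max_image Finset.univ lam Finset.univ_nonempty
  simp only [Finset.mem_univ, forall_true_left] at hmax
  have h0 : ∑ j, lam j * ⟪w i, w j⟫ = 0 := by
    have h : ⟪w i, ∑ j, lam j • w j⟫ = 0 := by rw [hzero, inner_zero_right]
    rw [inner_sum] at h
    simp only [real_inner_smul_right] at h
    exact h
  have hii : ⟪w i, w i⟫ = 1 := by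
    rw [real_inner_self_eq_norm_sq, hw i]; norm_num
  set S := Finset.univ.erase i with hS
  have hsplit : ∑ j ∈ S, lam j * ⟪w i, w j⟫ + lam i = 0 := by
    have h := Finset.sum_erase_add Finset.univ (fun j => lam j * ⟪w i, w j⟫)
      (Finset.mem_univ i)
    simp only [h0, hii, mul_one] at h
    exact h
  have hSsum : ∑ j ∈ S, lam j = 1 - lam i := by
    have := Finset.sum_erase_add Finset.univ lam (Finset.mem_univ i)
    rw [hsum] at this; linarith
  by_cases hcase : ∃ j ∈ S, ⟪w i, w j⟫ ≤ -(1/n)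
  · obtain ⟨j, -, hj⟩ := hcase
    exact ⟨i, j, hj, arccos_part n _ hj⟩
  · exfalso
    push_neg at hcase
    have h1 : ∑ j ∈ S, lam j * (-(1/n)) ≤ ∑ j ∈ S, lam j * ⟪w i, w j⟫ :=
      Finset.sum_le_sum fun j hj =>
        mul_le_mul_of_nonneg_left (hcase j hj).le (hlam j)
    rw [← Finset.sum_mul, hSsum] at h1
    have hli : lam i ≤ 1/(n+1) := by
      rw [le_div_iff₀ (by linarith)]
      have h2 : (1 - lam i) * (-(1/n)) ≤ -lam i := by linarith
      have h3 : (n:ℝ) * ((1 - lam i) * (-(1/n))) ≤ (n:ℝ) * (-lam i) :=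
        mul_le_mul_of_nonneg_left h2 hn0.le
      have h4 : (n:ℝ) * ((1 - lam i) * (-(1/n))) = -(1 - lam i) := by
        field_simp
      nlinarith [h3, h4]
    have hlammax : ∀ j, lam j ≤ 1/(n+1) := fun j => le_trans (hmax j) hli
    have hall : ∀ j, lam j = 1/(n+1) := by
      intro j
      by_contra hne
      have hlt : lam j < 1/(n+1) := lt_of_le_of_ne (hlammax j) hne
      have hsl : ∑ k, lam k < ∑ k : Fin (n+1), 1/((n:ℝ)+1) :=
        Finset.sum_lt_sum (fun k _ => hlammax k) ⟨j, Finset.mem_univ j, hlt⟩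
      rw [hsum, Finset.sum_const, Finset.card_univ, Fintype.card_fin,
        nsmul_eq_mul] at hsl
      push_cast at hsl
      linarith [hinv1, hsl]
    have hSne : S.Nonempty := by
      have hc : S.card = n := by
        rw [hS, Finset.card_erase_of_mem (Finset.mem_univ i), Finset.card_univ,
          Fintype.card_fin]
        omega
      exact Finset.card_pos.mp (by omega)
    have hstrict : ∑ j ∈ S, lam j * (-(1/n)) < ∑ j ∈ S, lam j * ⟪w i, w j⟫ := by
      apply Finset.sum_lt_sum_of_nonempty hSne
      intro j hj
      have hpos : 0 < lam j := by rw [hall j]; positivity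
      exact mul_lt_mul_of_pos_left (hcase j hj) hpos
    rw [← Finset.sum_mul, hSsum] at hstrict
    rw [hall i] at hstrict hsplit
    have heq : (1 - 1/((n:ℝ)+1)) * (-(1/n)) = -(1/((n:ℝ)+1)) := by
      field_simp
      ring
    linarith [hstrict, hsplit, heq]
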